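/- (Hashing Lemma) Let X be a random variable on a finite set 𝒳 of even cardinality |𝒳| ≥ 2, and let F be a uniform balanced random predicate on 𝒳, independent of X. Then d(X) ≤ (3/2)·√|𝒳| · d(F(X)|F), where d(X) := d(P_X) and d(F(X)|F) := Σ_f P_F(f)·d(P_{f(X)}). -/

import Mathlib

/-!
Write `q = P_X - 1/n`, so that `d(X) = ‖q‖₁ / 2`, and for a balanced `f` with `f⁻¹(1) = S` the
term `d(P_{f(X)})` is `|q(S)|`. With `n = 2m` the claim becomes
`‖q‖₁ · C(2m, m) ≤ 3 √(2m) · ∑_{|S| = m} |q(S)|`.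

Let `A = {q > 0}`, `a = |A|`, `b = n - a`, so that `q(A) = ‖q‖₁ / 2 = -q(Aᶜ)`. Since
`∑_S q(S) = 0`, the right-hand sum is at least `2 |∑_{|S ∩ A| < j} q(S)|`. Splitting `S` into a
`k`-subset of `A` and an `(m - k)`-subset of `Aᶜ` computes the part with `|S ∩ A| = k`; multiplied
by `ab` it is `q(A) (H(k) - H(k + 1))` for `H(k) = k (k + b - m) C(a, k) C(b, m - k)`, so the sum
over `k < j` telescopes to `-q(A) H(j)`. For `j = ⌈a/2⌉` what is left is
`ab · C(2m, m) ≤ 3 √(2m) · H(j)`, which by parity of `a` becomes `4 c_m ≤ 3 √(2m) c_α c_β` for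
`c_k = C(2k, k) / 4^k` and `m - 1 ≤ α + β ≤ m`. This follows from the Wallis-type bounds
`5/4 ≤ c_k² (4k + 1)` for `k ≥ 1` and `c_k² (4k + 2) ≤ 45/32` for `k ≥ 2`, the two sides being
monotone in `k`.
-/

open Finset

/-- The distance of a distribution `P` on a finite set `Z` from the uniform
distribution: `d(P) = (1/2) ∑_z |P z - 1/|Z||`. -/
noncomputable def distUnif {Z : Type*} [Fintype Z] (P : Z → ℝ) : ℝ :=
  (1 / 2) * ∑ z, |P z - 1 / (Fintype.card Z : ℝ)|

/-- The balanced predicates on a finite type `𝒳`: predicates `f : 𝒳 → Bool` with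
`|f⁻¹(0)| = |f⁻¹(1)|` (identifying `{0,1}` with `Bool`). -/
def Bal (𝒳 : Type*) [Fintype 𝒳] [DecidableEq 𝒳] : Finset (𝒳 → Bool) :=
  univ.filter (fun f =>
    (univ.filter (fun x => f x = false)).card = (univ.filter (fun x => f x = true)).card)

/-- The distribution of a uniform balanced random predicate on `𝒳`. -/
noncomputable def PF {𝒳 : Type*} [Fintype 𝒳] [DecidableEq 𝒳] (f : 𝒳 → Bool) : ℝ :=
  if f ∈ Bal 𝒳 then ((Bal 𝒳).card : ℝ)⁻¹ else 0

namespace Nat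

noncomputable def centralBinomRatio (k : ℕ) : ℝ := (centralBinom k : ℝ) / 4 ^ k

lemma centralBinomRatio_pos (k : ℕ) : 0 < centralBinomRatio k := by
  have := centralBinom_pos k
  unfold centralBinomRatio
  positivity

lemma centralBinomRatio_zero : centralBinomRatio 0 = 1 := by
  simp [centralBinomRatio]

lemma centralBinomRatio_two : centralBinomRatio 2 = 3 / 8 := by
  norm_num [centralBinomRatio, centralBinom_eq_two_mul_choose, choose]

lemma centralBinomRatio_succ (k : ℕ) :
    centralBinomRatio (k + 1) = centralBinomRatio k * ((2 * k + 1) / (2 * k + 2)) := by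
  have h : ((k + 1 : ℕ) : ℝ) * centralBinom (k + 1) = 2 * (2 * k + 1) * centralBinom k := by
    exact_mod_cast succ_mul_centralBinom_succ k
  simp only [centralBinomRatio, pow_succ]
  field_simp
  push_cast at h
  linear_combination 2 * h

lemma antitone_centralBinomRatio : Antitone centralBinomRatio :=
  antitone_nat_of_succ_le fun k => by
    rw [centralBinomRatio_succ]
    refine mul_le_of_le_one_right (centralBinomRatio_pos k).le ?_
    rw [div_le_one (by positivity)]
    linarith

lemma monotone_sq_centralBinomRatio_mul :
    Monotone fun k : ℕ => centralBinomRatio k ^ 2 * (4 * k + 1) :=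
  monotone_nat_of_le_succ fun k => by
    rw [centralBinomRatio_succ, mul_pow, mul_assoc]
    refine mul_le_mul_of_nonneg_left ?_ (sq_nonneg _)
    rw [div_pow, div_mul_eq_mul_div, le_div_iff₀ (by positivity)]
    push_cast
    nlinarith

lemma antitone_sq_centralBinomRatio_mul :
    Antitone fun k : ℕ => centralBinomRatio k ^ 2 * (4 * k + 2) :=
  antitone_nat_of_succ_le fun k => by
    rw [centralBinomRatio_succ, mul_pow, mul_assoc]
    refine mul_le_mul_of_nonneg_left ?_ (sq_nonneg _)
    rw [div_pow, div_mul_eq_mul_div, div_le_iff₀ (by positivity)]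
    push_cast
    nlinarith

lemma five_div_four_le_sq_centralBinomRatio_mul {k : ℕ} (hk : 1 ≤ k) :
    5 / 4 ≤ centralBinomRatio k ^ 2 * (4 * k + 1) := by
  have h := monotone_sq_centralBinomRatio_mul hk
  norm_num [centralBinomRatio, centralBinom_eq_two_mul_choose] at h
  exact h

lemma sq_centralBinomRatio_mul_le {k : ℕ} (hk : 2 ≤ k) :
    centralBinomRatio k ^ 2 * (4 * k + 2) ≤ 45 / 32 := by
  have h := antitone_sq_centralBinomRatio_mul hk
  norm_num [centralBinomRatio_two] at h
  exact h

lemma centralBinom_eq_centralBinomRatio_mul (k : ℕ) :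
    (centralBinom k : ℝ) = centralBinomRatio k * 4 ^ k := by
  rw [centralBinomRatio, div_mul_cancel₀ _ (by positivity)]

lemma add_one_mul_choose_two_mul_add_one (n : ℕ) :
    (n + 1) * (2 * n + 1).choose (n + 1) = (2 * n + 1) * centralBinom n := by
  rw [centralBinom_eq_two_mul_choose, add_one_mul_choose_eq, mul_comm]

lemma four_mul_centralBinomRatio_le {m α β : ℕ} (hm : 1 ≤ m) (hle : α + β ≤ m)
    (hge : m ≤ α + β + 1) :
    4 * centralBinomRatio m ≤ 3 * √(2 * m) * (centralBinomRatio α * centralBinomRatio β) := by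
  have four_le_sqrt : 4 ≤ 3 * √(2 * m) := by
    have : (1 : ℝ) ≤ m := by exact_mod_cast hm
    have : 4 / 3 ≤ √(2 * m) := by
      rw [Real.le_sqrt (by norm_num) (by positivity)]
      linarith
    linarith
  have hgm := centralBinomRatio_pos m
  have hgα := centralBinomRatio_pos α
  have hgβ := centralBinomRatio_pos β
  rcases Nat.eq_zero_or_pos α with rfl | hα
  · rw [centralBinomRatio_zero, one_mul]
    exact mul_le_mul four_le_sqrt (antitone_centralBinomRatio (by omega)) hgm.le (by positivity)
  rcases Nat.eq_zero_or_pos β with rfl | hβ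
  · rw [centralBinomRatio_zero, mul_one]
    exact mul_le_mul four_le_sqrt (antitone_centralBinomRatio (by omega)) hgm.le (by positivity)
  have hm2 : (2 : ℝ) ≤ m := by exact_mod_cast (show 2 ≤ m by omega)
  have hαβ : 25 / 16 ≤ centralBinomRatio α ^ 2 * centralBinomRatio β ^ 2 * (2 * m + 1) ^ 2 := by
    have hprod := mul_le_mul (five_div_four_le_sq_centralBinomRatio_mul hα)
      (five_div_four_le_sq_centralBinomRatio_mul hβ) (by norm_num) (by positivity)
    have hsum : (α : ℝ) + β ≤ m := by exact_mod_cast hle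
    have hamgm : ((4 * α + 1) * (4 * β + 1) : ℝ) ≤ (2 * m + 1) ^ 2 := by
      nlinarith [sq_nonneg ((α : ℝ) - β)]
    nlinarith [mul_le_mul_of_nonneg_left hamgm
      (by positivity : 0 ≤ centralBinomRatio α ^ 2 * centralBinomRatio β ^ 2)]
  have hsq : (4 * centralBinomRatio m) ^ 2 ≤
      (3 * √(2 * m) * (centralBinomRatio α * centralBinomRatio β)) ^ 2 := by
    rw [mul_pow, mul_pow, mul_pow, Real.sq_sqrt (by positivity), mul_pow]
    refine le_of_mul_le_mul_right ?_ (by positivity : (0 : ℝ) < (2 * m + 1) ^ 2)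
    nlinarith [mul_le_mul_of_nonneg_right (sq_centralBinomRatio_mul_le (by exact_mod_cast hm2))
      (by positivity : (0 : ℝ) ≤ 2 * m + 1), mul_le_mul_of_nonneg_left hαβ
      (by positivity : (0 : ℝ) ≤ m)]
  exact (pow_le_pow_iff_left₀ (by positivity) (by positivity) two_ne_zero).mp hsq

end Nat

namespace Finset

variable {α : Type*} [DecidableEq α]

lemma sum_powersetCard_succ_sum {M : Type*} [AddCommMonoid M] (s : Finset α) (k : ℕ)
    (f : α → M) :
    ∑ U ∈ s.powersetCard (k + 1), ∑ x ∈ U, f x = (#s - 1).choose k • ∑ x ∈ s, f x := by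
  rw [sum_comm' (t' := s) (s' := fun x => {U ∈ s.powersetCard (k + 1) | {x} ⊆ U})
    (fun U x => by simp only [mem_filter, mem_powersetCard, singleton_subset_iff]; grind),
    smul_sum]
  refine sum_congr rfl fun x hx => ?_
  rw [sum_const, card_filter_powersetCard_subset _ _ _ (by simpa using hx) (by simp),
    card_singleton, Nat.add_sub_cancel]

lemma card_mul_sum_powersetCard_sum (s : Finset α) (k : ℕ) (f : α → ℝ) :
    (#s : ℝ) * ∑ U ∈ s.powersetCard k, ∑ x ∈ U, f x = k * (#s).choose k * ∑ x ∈ s, f x := by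
  rcases k with _ | k
  · simp
  rw [sum_powersetCard_succ_sum, nsmul_eq_mul, ← mul_assoc]
  congr 1
  rcases hs : #s with _ | n
  · simp
  rw [Nat.add_sub_cancel]
  exact_mod_cast (Nat.add_one_mul_choose_eq n k).trans (mul_comm _ _)

lemma sum_powersetCard_sum_eq_zero {M : Type*} [AddCommMonoid M] {s : Finset α}
    {f : α → M} (hf : ∑ x ∈ s, f x = 0) (m : ℕ) :
    ∑ S ∈ s.powersetCard m, ∑ x ∈ S, f x = 0 := by
  rcases m with _ | m
  · simp
  rw [sum_powersetCard_succ_sum, hf, smul_zero]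

lemma sum_powersetCard_filter_card_inter {M : Type*} [AddCommMonoid M] {s t : Finset α}
    (hst : Disjoint s t) {k m : ℕ} (hk : k ≤ m) (F : Finset α → M) :
    ∑ S ∈ (s ∪ t).powersetCard m with #(S ∩ s) = k, F S =
      ∑ U ∈ s.powersetCard k, ∑ V ∈ t.powersetCard (m - k), F (U ∪ V) := by
  rw [← sum_product']
  refine sum_nbij' (fun S => (S ∩ s, S ∩ t)) (fun p => p.1 ∪ p.2) ?_ ?_ ?_ ?_ ?_
  · intro S hS
    simp only [mem_filter, mem_powersetCard] at hS
    have hcard : #(S ∩ s) + #(S ∩ t) = #S := by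
      rw [← card_union_of_disjoint (hst.mono inter_subset_right inter_subset_right),
        ← inter_union_distrib_left, inter_eq_left.mpr hS.1.1]
    simp only [mem_product, mem_powersetCard]
    refine ⟨⟨inter_subset_right, hS.2⟩, inter_subset_right, by omega⟩
  · intro p hp
    simp only [mem_product, mem_powersetCard] at hp
    have hp1 : p.1 ∩ s = p.1 := inter_eq_left.mpr hp.1.1
    have hp2 : p.2 ∩ s = ∅ := disjoint_iff_inter_eq_empty.mp (hst.symm.mono_left hp.2.1)
    simp only [mem_filter, mem_powersetCard, union_inter_distrib_right, hp1, hp2, union_empty]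
    refine ⟨⟨union_subset_union hp.1.1 hp.2.1, ?_⟩, hp.1.2⟩
    rw [card_union_of_disjoint (hst.mono hp.1.1 hp.2.1)]
    omega
  · intro S hS
    simp only [mem_filter, mem_powersetCard] at hS
    rw [← inter_union_distrib_left, inter_eq_left.mpr hS.1.1]
  · intro p hp
    simp only [mem_product, mem_powersetCard] at hp
    have hdisj := hst.mono hp.1.1 hp.2.1
    ext x <;> simp only [mem_inter, mem_union] <;> grind [disjoint_left]
  · intro S hS
    simp only [mem_filter, mem_powersetCard] at hS
    rw [← inter_union_distrib_left, inter_eq_left.mpr hS.1.1]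

lemma two_mul_abs_sum_filter_le_sum_abs {ι : Type*} (s : Finset ι) (p : ι → Prop)
    [DecidablePred p] {f : ι → ℝ} (hf : ∑ i ∈ s, f i = 0) :
    2 * |∑ i ∈ s with p i, f i| ≤ ∑ i ∈ s, |f i| := by
  have hsplit := sum_filter_add_sum_filter_not s p f
  have habs := sum_filter_add_sum_filter_not s p (fun i => |f i|)
  have hp := abs_sum_le_sum_abs f (s.filter p)
  have hnp := abs_sum_le_sum_abs f (s.filter (¬p ·))
  have hnot : ∑ i ∈ s with ¬p i, f i = -∑ i ∈ s with p i, f i := by linarith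
  rw [hnot, abs_neg] at hnp
  linarith

end Finset

lemma Nat.cast_choose_succ_mul (n k : ℕ) :
    (n.choose (k + 1) : ℝ) * (k + 1) = n.choose k * (n - k) := by
  rcases le_or_gt k n with h | h
  · exact_mod_cast Nat.choose_succ_right_eq n k
  · simp [Nat.choose_eq_zero_of_lt h, Nat.choose_eq_zero_of_lt (Nat.lt_succ_of_lt h)]

noncomputable def hypergeomPotential (a b m k : ℕ) : ℝ :=
  k * (k + b - m) * a.choose k * b.choose (m - k)

lemma hypergeomPotential_zero (a b m : ℕ) : hypergeomPotential a b m 0 = 0 := by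
  simp [hypergeomPotential]

lemma hypergeomPotential_sub_succ (a b : ℕ) {m k : ℕ} (hk : k < m) :
    hypergeomPotential a b m k - hypergeomPotential a b m (k + 1) =
      (b * k - a * (m - k)) * a.choose k * b.choose (m - k) := by
  obtain ⟨l, rfl⟩ : ∃ l, m = k + l + 1 := ⟨m - k - 1, by omega⟩
  have ha := Nat.cast_choose_succ_mul a k
  have hb := Nat.cast_choose_succ_mul b l
  rw [hypergeomPotential, hypergeomPotential, show k + l + 1 - k = l + 1 by omega,
    show k + l + 1 - (k + 1) = l by omega]
  push_cast
  linear_combination (l - b : ℝ) * b.choose l * ha + (a - k : ℝ) * a.choose k * hb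

open Nat in
lemma mul_choose_le_hypergeomPotential_of_even {α β : ℕ} (h : 1 ≤ α + β) :
    ((2 * α : ℕ) * (2 * β : ℕ) * (2 * (α + β)).choose (α + β) : ℝ) ≤
      3 * √(2 * (α + β : ℕ)) * hypergeomPotential (2 * α) (2 * β) (α + β) α := by
  have hgα := centralBinomRatio_pos α
  have hgβ := centralBinomRatio_pos β
  calc ((2 * α : ℕ) * (2 * β : ℕ) * (2 * (α + β)).choose (α + β) : ℝ)
      = (α * β * 4 ^ α * 4 ^ β) * (4 * centralBinomRatio (α + β)) := by
        rw [← centralBinom_eq_two_mul_choose, centralBinom_eq_centralBinomRatio_mul, pow_add]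
        push_cast
        ring
    _ ≤ (α * β * 4 ^ α * 4 ^ β) *
          (3 * √(2 * (α + β : ℕ)) * (centralBinomRatio α * centralBinomRatio β)) :=
        mul_le_mul_of_nonneg_left (four_mul_centralBinomRatio_le h le_rfl (by omega))
          (by positivity)
    _ = 3 * √(2 * (α + β : ℕ)) * hypergeomPotential (2 * α) (2 * β) (α + β) α := by
        rw [hypergeomPotential, Nat.add_sub_cancel_left, ← centralBinom_eq_two_mul_choose,
          ← centralBinom_eq_two_mul_choose, centralBinom_eq_centralBinomRatio_mul,
          centralBinom_eq_centralBinomRatio_mul]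
        push_cast
        ring

open Nat in
lemma mul_choose_le_hypergeomPotential_of_odd (α β : ℕ) :
    ((2 * α + 1 : ℕ) * (2 * β + 1 : ℕ) * (2 * (α + β + 1)).choose (α + β + 1) : ℝ) ≤
      3 * √(2 * (α + β + 1 : ℕ)) *
        hypergeomPotential (2 * α + 1) (2 * β + 1) (α + β + 1) (α + 1) := by
  have hgα := centralBinomRatio_pos α
  have hgβ := centralBinomRatio_pos β
  have hα : ((α + 1) * (2 * α + 1).choose (α + 1) : ℝ) = (2 * α + 1) * centralBinom α := by
    exact_mod_cast add_one_mul_choose_two_mul_add_one α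
  have hβ : ((β + 1) * (2 * β + 1).choose (β + 1) : ℝ) = (2 * β + 1) * centralBinom β := by
    exact_mod_cast add_one_mul_choose_two_mul_add_one β
  calc ((2 * α + 1 : ℕ) * (2 * β + 1 : ℕ) * (2 * (α + β + 1)).choose (α + β + 1) : ℝ)
      = ((2 * α + 1) * (2 * β + 1) * 4 ^ α * 4 ^ β) * (4 * centralBinomRatio (α + β + 1)) := by
        rw [← centralBinom_eq_two_mul_choose, centralBinom_eq_centralBinomRatio_mul, pow_succ,
          pow_add]
        push_cast
        ring
    _ ≤ ((2 * α + 1) * (2 * β + 1) * 4 ^ α * 4 ^ β) *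
          (3 * √(2 * (α + β + 1 : ℕ)) * (centralBinomRatio α * centralBinomRatio β)) :=
        mul_le_mul_of_nonneg_left (four_mul_centralBinomRatio_le (by omega) (by omega) le_rfl)
          (by positivity)
    _ = 3 * √(2 * (α + β + 1 : ℕ)) *
          (((α + 1) * (2 * α + 1).choose (α + 1)) * ((β + 1) * (2 * β + 1).choose (β + 1))) := by
        rw [hα, hβ, centralBinom_eq_centralBinomRatio_mul, centralBinom_eq_centralBinomRatio_mul]
        ring
    _ = 3 * √(2 * (α + β + 1 : ℕ)) *
          hypergeomPotential (2 * α + 1) (2 * β + 1) (α + β + 1) (α + 1) := by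
        rw [hypergeomPotential, show α + β + 1 - (α + 1) = β by omega, ← choose_symm_half]
        push_cast
        ring

lemma exists_mul_choose_le_hypergeomPotential {a b m : ℕ} (hm : 1 ≤ m) (hab : a + b = 2 * m) :
    ∃ j ≤ m, (a * b * (2 * m).choose m : ℝ) ≤ 3 * √(2 * m) * hypergeomPotential a b m j := by
  rcases Nat.even_or_odd' a with ⟨α, rfl | rfl⟩
  · obtain ⟨β, rfl⟩ : ∃ β, b = 2 * β := ⟨m - α, by omega⟩
    obtain rfl : m = α + β := by omega
    exact ⟨α, by omega, mul_choose_le_hypergeomPotential_of_even hm⟩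
  · obtain ⟨β, rfl⟩ : ∃ β, b = 2 * β + 1 := ⟨m - α - 1, by omega⟩
    obtain rfl : m = α + β + 1 := by omega
    exact ⟨α + 1, by omega, mul_choose_le_hypergeomPotential_of_odd α β⟩

section SubsetSums

variable {𝒳 : Type*} [Fintype 𝒳] [DecidableEq 𝒳] {q : 𝒳 → ℝ}

lemma sum_compl_eq_neg_sum (hq : ∑ x, q x = 0) (A : Finset 𝒳) :
    ∑ x ∈ Aᶜ, q x = -∑ x ∈ A, q x := by
  rw [eq_neg_iff_add_eq_zero, add_comm, sum_add_sum_compl, hq]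

lemma card_mul_card_mul_sum_powersetCard_card_inter (hq : ∑ x, q x = 0) (A : Finset 𝒳)
    {k m : ℕ} (hk : k ≤ m) :
    (#A * #Aᶜ : ℝ) * ∑ S ∈ univ.powersetCard m with #(S ∩ A) = k, ∑ x ∈ S, q x =
      (∑ x ∈ A, q x) * ((#Aᶜ * k - #A * (m - k)) * (#A).choose k * (#Aᶜ).choose (m - k)) := by
  have hsplit := sum_powersetCard_filter_card_inter (disjoint_compl_right (a := A)) hk
    (fun S => ∑ x ∈ S, q x)
  rw [union_compl] at hsplit
  have hU := card_mul_sum_powersetCard_sum A k q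
  have hV := card_mul_sum_powersetCard_sum Aᶜ (m - k) q
  rw [sum_compl_eq_neg_sum hq, Nat.cast_sub hk] at hV
  have hunion : ∀ U ∈ A.powersetCard k, ∀ V ∈ Aᶜ.powersetCard (m - k),
      ∑ x ∈ U ∪ V, q x = ∑ x ∈ U, q x + ∑ x ∈ V, q x := fun U hU V hV =>
    sum_union (disjoint_compl_right.mono (mem_powersetCard.mp hU).1 (mem_powersetCard.mp hV).1)
  rw [hsplit, sum_congr rfl fun U hU => sum_congr rfl fun V hV => hunion U hU V hV]
  simp only [sum_add_distrib, sum_const, card_powersetCard, nsmul_eq_mul, ← mul_sum]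
  linear_combination ((#Aᶜ).choose (m - k) * #Aᶜ : ℝ) * hU + ((#A).choose k * #A : ℝ) * hV

theorem two_mul_abs_mul_hypergeomPotential_le (hq : ∑ x, q x = 0) (A : Finset 𝒳)
    {j m : ℕ} (hj : j ≤ m) :
    2 * |(∑ x ∈ A, q x) * hypergeomPotential #A #Aᶜ m j| ≤
      #A * #Aᶜ * ∑ S ∈ univ.powersetCard m, |∑ x ∈ S, q x| := by
  have hlow : (#A * #Aᶜ : ℝ) * ∑ S ∈ univ.powersetCard m with #(S ∩ A) < j, ∑ x ∈ S, q x =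
      -((∑ x ∈ A, q x) * hypergeomPotential #A #Aᶜ m j) := by
    rw [← sum_fiberwise_of_maps_to (g := fun S => #(S ∩ A)) (t := range j) (by simp), mul_sum]
    have hfiber : ∀ k ∈ range j, (#A * #Aᶜ : ℝ) *
        ∑ S ∈ {S ∈ {S ∈ univ.powersetCard m | #(S ∩ A) < j} | #(S ∩ A) = k}, ∑ x ∈ S, q x =
        (∑ x ∈ A, q x) * (hypergeomPotential #A #Aᶜ m k - hypergeomPotential #A #Aᶜ m (k + 1)) := by
      intro k hk
      have hkj := mem_range.mp hk
      rw [filter_filter, filter_congr fun S _ => and_iff_right_of_imp fun h => h ▸ hkj,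
        card_mul_card_mul_sum_powersetCard_card_inter hq A (by omega),
        hypergeomPotential_sub_succ _ _ (by omega)]
    rw [sum_congr rfl hfiber, ← mul_sum, sum_range_sub', hypergeomPotential_zero]
    ring
  have hcancel := two_mul_abs_sum_filter_le_sum_abs (univ.powersetCard m)
    (fun S => #(S ∩ A) < j) (sum_powersetCard_sum_eq_zero hq m)
  rw [← abs_neg, ← hlow, abs_mul, abs_of_nonneg (by positivity)]
  linarith [mul_le_mul_of_nonneg_left hcancel (by positivity : (0 : ℝ) ≤ #A * #Aᶜ)]

lemma sum_abs_eq_two_mul_sum_pos (hq : ∑ x, q x = 0) :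
    ∑ x, |q x| = 2 * ∑ x with 0 < q x, q x := by
  set A : Finset 𝒳 := {x | 0 < q x}
  rw [← sum_add_sum_compl A, sum_congr rfl fun x hx => abs_of_pos (mem_filter.mp hx).2,
    sum_congr rfl fun x hx => abs_of_nonpos (not_lt.mp (by simpa [A] using hx)), sum_neg_distrib,
    sum_compl_eq_neg_sum hq]
  ring

theorem sum_abs_mul_choose_le_sum_powersetCard_abs (hq : ∑ x, q x = 0) {m : ℕ} (hm : 1 ≤ m)
    (hcard : Fintype.card 𝒳 = 2 * m) :
    (∑ x, |q x|) * (2 * m).choose m ≤ 3 * √(2 * m) * ∑ S ∈ univ.powersetCard m, |∑ x ∈ S, q x| := by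
  by_cases hzero : ∀ x, q x = 0
  · simp only [hzero, abs_zero, sum_const_zero, zero_mul]
    positivity
  obtain ⟨x₀, hx₀⟩ := not_forall.mp hzero
  set A : Finset 𝒳 := {x | 0 < q x}
  obtain ⟨x, -, hx⟩ := exists_pos_of_sum_zero_of_exists_nonzero q hq ⟨x₀, mem_univ _, hx₀⟩
  obtain ⟨y, -, hy⟩ := exists_pos_of_sum_zero_of_exists_nonzero (-q)
    (by simp [sum_neg_distrib, hq]) ⟨x₀, mem_univ _, by simpa using hx₀⟩
  have hab : (0 : ℝ) < #A * #Aᶜ := by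
    have hA : 0 < #A := card_pos.mpr ⟨x, by simp [A, hx]⟩
    have hAc : 0 < #Aᶜ := card_pos.mpr ⟨y, by simpa [A] using hy.le⟩
    positivity
  obtain ⟨j, hj, hchoose⟩ := exists_mul_choose_le_hypergeomPotential hm
    (show #A + #Aᶜ = 2 * m by rw [card_add_card_compl, hcard])
  refine le_of_mul_le_mul_left ?_ hab
  calc (#A * #Aᶜ : ℝ) * ((∑ x, |q x|) * (2 * m).choose m)
      = (∑ x, |q x|) * (#A * #Aᶜ * (2 * m).choose m) := by ring
    _ ≤ (∑ x, |q x|) * (3 * √(2 * m) * hypergeomPotential #A #Aᶜ m j) := by gcongr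
    _ = 3 * √(2 * m) * (2 * ((∑ x ∈ A, q x) * hypergeomPotential #A #Aᶜ m j)) := by
      rw [sum_abs_eq_two_mul_sum_pos hq]; ring
    _ ≤ 3 * √(2 * m) * (2 * |(∑ x ∈ A, q x) * hypergeomPotential #A #Aᶜ m j|) := by
      gcongr; exact le_abs_self _
    _ ≤ 3 * √(2 * m) * (#A * #Aᶜ * ∑ S ∈ univ.powersetCard m, |∑ x ∈ S, q x|) :=
      mul_le_mul_of_nonneg_left (two_mul_abs_mul_hypergeomPotential_le hq A hj) (by positivity)
    _ = (#A * #Aᶜ : ℝ) * (3 * √(2 * m) * ∑ S ∈ univ.powersetCard m, |∑ x ∈ S, q x|) := by ring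

end SubsetSums

section Balanced

variable {𝒳 : Type*} [Fintype 𝒳] [DecidableEq 𝒳] {m : ℕ}

lemma mem_bal_iff (hcard : Fintype.card 𝒳 = 2 * m) (f : 𝒳 → Bool) :
    f ∈ Bal 𝒳 ↔ #{x | f x = true} = m := by
  have hsplit := card_filter_add_card_filter_not (s := univ) (fun x => f x = true)
  simp only [Bool.not_eq_true, card_univ, hcard] at hsplit
  simp only [Bal, mem_filter, mem_univ, true_and]
  omega

lemma sum_bal {M : Type*} [AddCommMonoid M] (hcard : Fintype.card 𝒳 = 2 * m)
    (g : (𝒳 → Bool) → M) :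
    ∑ f ∈ Bal 𝒳, g f = ∑ S ∈ univ.powersetCard m, g (fun x => decide (x ∈ S)) := by
  refine sum_nbij' (fun f => ({x | f x = true} : Finset 𝒳)) (fun S x => decide (x ∈ S))
    (fun f hf => by simpa [mem_bal_iff hcard] using hf)
    (fun S hS => by simpa [mem_bal_iff hcard] using hS)
    (fun f _ => by funext x; simp) (fun S _ => by ext x; simp) (fun f _ => ?_)
  congr
  funext x
  simp

lemma card_bal (hcard : Fintype.card 𝒳 = 2 * m) : #(Bal 𝒳) = (2 * m).choose m := by
  rw [card_eq_sum_ones, sum_bal hcard, ← card_eq_sum_ones, card_powersetCard, card_univ, hcard]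

lemma sum_PF_mul (hcard : Fintype.card 𝒳 = 2 * m) (g : (𝒳 → Bool) → ℝ) :
    ∑ f, PF f * g f =
      ((2 * m).choose m : ℝ)⁻¹ * ∑ S ∈ univ.powersetCard m, g (fun x => decide (x ∈ S)) := by
  simp only [PF, ite_mul, zero_mul, sum_ite_mem, univ_inter, ← mul_sum, sum_bal hcard,
    card_bal hcard]

lemma distUnif_bool {P : Bool → ℝ} (h : P false + P true = 1) :
    distUnif P = |P true - 1 / 2| := by
  have hfalse : P false - 1 / 2 = -(P true - 1 / 2) := by linarith
  simp only [distUnif, Fintype.sum_bool, Fintype.card_bool, Nat.cast_ofNat, hfalse, abs_neg]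
  ring

lemma distUnif_map_decide_mem {PX : 𝒳 → ℝ} (hPX1 : ∑ x, PX x = 1)
    (hcard : Fintype.card 𝒳 = 2 * m) (hm : m ≠ 0) {S : Finset 𝒳} (hS : #S = m) :
    distUnif (fun b => ∑ x ∈ univ.filter (fun x => decide (x ∈ S) = b), PX x) =
      |∑ x ∈ S, (PX x - 1 / (Fintype.card 𝒳 : ℝ))| := by
  have htotal := sum_fiberwise univ (fun x => decide (x ∈ S)) PX
  rw [Fintype.sum_bool, hPX1, add_comm] at htotal
  rw [distUnif_bool htotal]
  simp only [decide_eq_true_eq, filter_mem_eq_inter, univ_inter, sum_sub_distrib, sum_const, hS,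
    nsmul_eq_mul, hcard, Nat.cast_mul, Nat.cast_ofNat]
  congr 1
  field_simp

end Balanced

theorem hashing_lemma_general {𝒳 : Type} [Fintype 𝒳] [DecidableEq 𝒳]
    (heven : Even (Fintype.card 𝒳)) (hcard : 2 ≤ Fintype.card 𝒳)
    (PX : 𝒳 → ℝ) (hPX1 : ∑ x, PX x = 1) :
    distUnif PX ≤ (3 / 2) * Real.sqrt (Fintype.card 𝒳) *
      ∑ f, PF f * distUnif (fun b => ∑ x ∈ univ.filter (fun x => f x = b), PX x) := by
  obtain ⟨m, hm⟩ := heven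
  have hn : Fintype.card 𝒳 = 2 * m := by omega
  have hnR : (Fintype.card 𝒳 : ℝ) = 2 * m := by exact_mod_cast hn
  set q : 𝒳 → ℝ := fun x => PX x - 1 / (Fintype.card 𝒳 : ℝ)
  have hq : ∑ x, q x = 0 := by
    rw [sum_sub_distrib, hPX1, sum_const, card_univ, nsmul_eq_mul,
      mul_one_div_cancel (by positivity), sub_self]
  have hRHS : ∑ f, PF f * distUnif (fun b => ∑ x ∈ univ.filter (fun x => f x = b), PX x) =
      ((2 * m).choose m : ℝ)⁻¹ * ∑ S ∈ univ.powersetCard m, |∑ x ∈ S, q x| := by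
    rw [sum_PF_mul hn]
    exact congrArg _ (sum_congr rfl fun S hS =>
      distUnif_map_decide_mem hPX1 hn (by omega) (mem_powersetCard_univ.mp hS))
  have hmain := sum_abs_mul_choose_le_sum_powersetCard_abs hq (by omega) hn
  have hC : (0 : ℝ) < (2 * m).choose m := by exact_mod_cast Nat.choose_pos (by omega)
  calc distUnif PX = (∑ x, |q x|) * (2 * m).choose m / (2 * (2 * m).choose m) := by
        rw [show distUnif PX = 1 / 2 * ∑ x, |q x| from rfl]
        field_simp
    _ ≤ (3 * √(2 * m) * ∑ S ∈ univ.powersetCard m, |∑ x ∈ S, q x|) / (2 * (2 * m).choose m) := by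
        gcongr
    _ = _ := by
        rw [hRHS, hnR]
        field_simp

/-- **Hashing Lemma (paper: Lemma `lem:rel`)**: let `X` be a random variable on a finite
set `𝒳` of even cardinality `|𝒳| ≥ 2` and let `F` be a uniform balanced random
predicate on `𝒳`, independent of `X`. Then `d(X) ≤ (3/2)·√|𝒳|·d(F(X)|F)`, where
`d(F(X)|F) = ∑_f P_F(f)·d(P_{f(X)})`. -/
theorem hashing_lemma {𝒳 : Type} [Fintype 𝒳] [DecidableEq 𝒳]
    (heven : Even (Fintype.card 𝒳)) (hcard : 2 ≤ Fintype.card 𝒳)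
    (PX : 𝒳 → ℝ) (hPX0 : ∀ x, 0 ≤ PX x) (hPX1 : ∑ x, PX x = 1) :
    distUnif PX ≤ (3 / 2) * Real.sqrt (Fintype.card 𝒳) *
      ∑ f, PF f * distUnif (fun b => ∑ x ∈ univ.filter (fun x => f x = b), PX x) :=
  hashing_lemma_general heven hcard PX hPX1
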